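/- Let r ≥ 3 and n ≥ 8r², and let G be an r-partite graph on parts (V_1,...,V_r) of size n with minimum cross-degree at least (1 − 1/(8r²))n. Fix j ∈ [r], a vertex v ∈ V_j, vertices u_i ∈ V_i ∩ N(v) for each i ≠ j, and a vertex v' ∈ V_j ∖ {v}. Let H be the set of transversal cliques A = {a_1,...,a_r}∖{a_j} (one vertex a_i ∈ V_i for each i ≠ j) such that G[A] is a clique, each a_i is adjacent to u_{i'} for all i' ≠ i (i' ≠ j), and each a_i is adjacent to both v and v'. Then |H| ≥ k_{[r]∖{j}}(G)/2 ≥ k_{[r]}(G)/(2n). -/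

import Mathlib

/-!
Let `I = [r] ∖ {j}` and `δ = n / (8 r²)`, so every vertex has at most `δ` non-neighbours in each
other part. Extending cliques part by part, a clique on `k` parts has at least `n - k δ` common
neighbours in a new part; hence `k_I ≥ (n - r δ)^(r-1) ≥ (7/8) n^(r-1)` by Bernoulli's inequality.
A clique on `I` fails to lie in `H` only if it contains a non-neighbour `x` (in another part) of
one of the at most `r + 1` vertices `v, v', u_i`. Each such vertex has at most `(r - 1) δ` such
non-neighbours, each lying in at most `n^(r-2)` cliques on `I`, so at most `n^(r-1) / 8` cliques
fail and `|H| ≥ k_I / 2`. The first inequality holds because every clique on `[r]` is a clique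
on `I` plus one of the `n` vertices of `V_j`.
-/

open Finset
open scoped Classical

/-- The set of cliques of `G` having exactly one vertex in part `V_i` for each `i ∈ I`. -/
noncomputable def partCliques {V : Type*} [Fintype V] [DecidableEq V] {r : ℕ}
    (G : SimpleGraph V) (P : V → Fin r) (I : Finset (Fin r)) : Finset (Finset V) :=
  Finset.univ.filter fun S => G.IsClique (S : Set V) ∧ S.image P = I ∧ S.card = I.card

lemma cast_card_biUnion_le {ι α : Type*} [DecidableEq α] (s : Finset ι) (t : ι → Finset α)
    {c : ℝ} (h : ∀ i ∈ s, (#(t i) : ℝ) ≤ c) : (#(s.biUnion t) : ℝ) ≤ #s * c := by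
  calc (#(s.biUnion t) : ℝ) ≤ ∑ i ∈ s, (#(t i) : ℝ) := by exact_mod_cast card_biUnion_le
    _ ≤ #s * c := by simpa using sum_le_card_nsmul s _ c h

lemma succ_mul_pred_mul_le_half_sub_pow {r : ℕ} (hr : 0 < r) {n : ℝ} (hn : 0 ≤ n) :
    (r + 1) * ((r - 1 : ℕ) * (n / (8 * r ^ 2)) * n ^ (r - 1 - 1)) ≤
      (n - r * (n / (8 * r ^ 2))) ^ (r - 1) / 2 := by
  obtain ⟨m, rfl⟩ := Nat.exists_eq_add_of_le' hr
  simp only [Nat.add_sub_cancel]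
  push_cast
  have hpow : (m : ℝ) * n ^ (m - 1) * n = m * n ^ m := by
    rcases m with _ | m
    · simp
    · simp [pow_succ, mul_assoc]
  have hlhs : (m + 1 + 1) * (m * (n / (8 * (m + 1) ^ 2)) * n ^ (m - 1)) =
      (m + 2) * m / (8 * (m + 1) ^ 2) * n ^ m := by
    calc _ = (m + 2) / (8 * (m + 1) ^ 2) * (m * n ^ (m - 1) * n) := by ring
      _ = _ := by rw [hpow]; ring
  have hrhs : n - (m + 1) * (n / (8 * (m + 1) ^ 2)) = (1 + -(1 / (8 * (m + 1)))) * n := by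
    field_simp; ring
  have hbernoulli := one_add_mul_le_pow (a := -(1 / (8 * ((m : ℝ) + 1))))
    (by have : 1 / (8 * ((m : ℝ) + 1)) ≤ 1 := by rw [div_le_one (by positivity)]; linarith
        linarith) m
  have hfrac : (m + 2) * m / (8 * ((m : ℝ) + 1) ^ 2) ≤ 1 / 8 := by
    rw [div_le_div_iff₀ (by positivity) (by norm_num)]; nlinarith
  have hlin : (7 / 8 : ℝ) ≤ 1 + m * -(1 / (8 * (m + 1))) := by
    have : (m : ℝ) * (1 / (8 * (m + 1))) ≤ 1 / 8 := by
      rw [mul_one_div, div_le_div_iff₀ (by positivity) (by norm_num)]; linarith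
    linarith
  have hnm : 0 ≤ n ^ m := pow_nonneg hn m
  rw [hlhs, hrhs, mul_pow]
  nlinarith

section

variable {V : Type*} [Fintype V] {r n : ℕ} {G : SimpleGraph V} {P : V → Fin r}

lemma card_part_filter_add_card_part_filter_not (hsize : ∀ i : Fin r, #{v | P v = i} = n)
    (i : Fin r) (q : V → Prop) [DecidablePred q] :
    #{x | P x = i ∧ q x} + #{x | P x = i ∧ ¬ q x} = n := by
  rw [← hsize i, ← filter_filter, ← filter_filter, card_filter_add_card_filter_not]

lemma card_not_adj_le_of_le_card_adj (hsize : ∀ i : Fin r, #{v | P v = i} = n) {δ : ℝ} {a : V}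
    {i : Fin r} (h : n - δ ≤ #{x | P x = i ∧ G.Adj a x}) :
    (#{x | P x = i ∧ ¬ G.Adj a x} : ℝ) ≤ δ := by
  have hsplit : (#{x | P x = i ∧ G.Adj a x} : ℝ) + #{x | P x = i ∧ ¬ G.Adj a x} = n := by
    exact_mod_cast card_part_filter_add_card_part_filter_not hsize i (G.Adj a)
  linarith

variable [DecidableEq V] {I : Finset (Fin r)} {A : Finset V}

@[simp]
lemma mem_partCliques :
    A ∈ partCliques G P I ↔ G.IsClique (A : Set V) ∧ A.image P = I ∧ #A = #I := by
  simp [partCliques]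

lemma injOn_of_mem_partCliques (hA : A ∈ partCliques G P I) : Set.InjOn P A := by
  obtain ⟨-, himg, hcard⟩ := mem_partCliques.1 hA
  rw [← card_image_iff, himg, hcard]

lemma card_filter_eq_one_of_mem_partCliques (hA : A ∈ partCliques G P I) {i : Fin r}
    (hi : i ∈ I) : #{x ∈ A | P x = i} = 1 := by
  obtain ⟨-, himg, -⟩ := mem_partCliques.1 hA
  obtain ⟨x, hx, rfl⟩ := mem_image.1 (himg ▸ hi)
  rw [card_eq_one]
  exact ⟨x, eq_singleton_iff_unique_mem.2 ⟨mem_filter.2 ⟨hx, rfl⟩,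
    fun y hy => injOn_of_mem_partCliques hA (mem_filter.1 hy).1 hx (mem_filter.1 hy).2⟩⟩

lemma erase_mem_partCliques (hA : A ∈ partCliques G P I) {x : V} (hx : x ∈ A) :
    A.erase x ∈ partCliques G P (I.erase (P x)) := by
  obtain ⟨hcl, himg, hcard⟩ := mem_partCliques.1 hA
  refine mem_partCliques.2 ⟨hcl.subset (coe_subset.2 (erase_subset _ _)), ?_, ?_⟩
  · rw [← himg, erase_eq, erase_eq, image_sdiff_of_injOn (injOn_of_mem_partCliques hA)
      (singleton_subset_iff.2 hx), image_singleton]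
  · rw [card_erase_of_mem hx, card_erase_of_mem (himg ▸ mem_image_of_mem P hx), hcard]

lemma notMem_of_mem_partCliques (hA : A ∈ partCliques G P I) {x : V} (hx : P x ∉ I) :
    x ∉ A := fun hxA => hx ((mem_partCliques.1 hA).2.1 ▸ mem_image_of_mem P hxA)

lemma card_partCliques_insert_le (hsize : ∀ i : Fin r, #{v | P v = i} = n) {i : Fin r}
    (hi : i ∉ I) : #(partCliques G P (insert i I)) ≤ #(partCliques G P I) * n := by
  calc #(partCliques G P (insert i I))
      ≤ #((partCliques G P I ×ˢ ({x | P x = i} : Finset V)).image fun p => insert p.2 p.1) := by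
        refine card_le_card fun A hA => ?_
        obtain ⟨x, hx, hPx⟩ := mem_image.1 ((mem_partCliques.1 hA).2.1 ▸ mem_insert_self i I)
        have hAx := erase_mem_partCliques hA hx
        rw [hPx, erase_insert hi] at hAx
        exact mem_image.2 ⟨(A.erase x, x), mem_product.2 ⟨hAx, by simpa using hPx⟩,
          insert_erase hx⟩
    _ ≤ #(partCliques G P I) * n := card_image_le.trans (by rw [card_product, hsize])

lemma card_partCliques_le_pow (hsize : ∀ i : Fin r, #{v | P v = i} = n) (I : Finset (Fin r)) :
    #(partCliques G P I) ≤ n ^ #I := by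
  induction I using Finset.induction_on with
  | empty =>
    refine card_le_one.2 fun A hA B hB => ?_
    rw [image_eq_empty.1 (mem_partCliques.1 hA).2.1, image_eq_empty.1 (mem_partCliques.1 hB).2.1]
  | insert i I hi ih =>
    rw [card_insert_of_notMem hi, pow_succ]
    exact (card_partCliques_insert_le hsize hi).trans (Nat.mul_le_mul_right n ih)

lemma card_partCliques_filter_mem_le (hsize : ∀ i : Fin r, #{v | P v = i} = n) {x : V}
    (hx : P x ∈ I) : #{A ∈ partCliques G P I | x ∈ A} ≤ n ^ (#I - 1) := by
  calc #{A ∈ partCliques G P I | x ∈ A} ≤ #(partCliques G P (I.erase (P x))) := by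
        refine card_le_card_of_injOn (·.erase x) (fun A hA => ?_) fun A hA B hB h => ?_
        · exact erase_mem_partCliques (mem_filter.1 hA).1 (mem_filter.1 hA).2
        · rw [← insert_erase (mem_filter.1 hA).2, ← insert_erase (mem_filter.1 hB).2]
          exact congrArg (insert x) h
    _ ≤ n ^ (#I - 1) := by
        rw [← card_erase_of_mem hx]
        exact card_partCliques_le_pow hsize _

lemma sub_card_mul_le_card_commonNbrs (hsize : ∀ i : Fin r, #{v | P v = i} = n) {δ : ℝ}
    (hδ : ∀ a i, P a ≠ i → (#{x | P x = i ∧ ¬ G.Adj a x} : ℝ) ≤ δ) {i : Fin r}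
    (hA : ∀ a ∈ A, P a ≠ i) : n - #A * δ ≤ #{x | P x = i ∧ ∀ a ∈ A, G.Adj a x} := by
  have hsplit := card_part_filter_add_card_part_filter_not hsize i fun x => ∀ a ∈ A, G.Adj a x
  have hbad : (#{x | P x = i ∧ ¬ ∀ a ∈ A, G.Adj a x} : ℝ) ≤ #A * δ := by
    refine le_trans ?_ (cast_card_biUnion_le A (fun a => {x | P x = i ∧ ¬ G.Adj a x})
      fun a ha => hδ a i (hA a ha))
    refine Nat.cast_le.2 (card_le_card fun x hx => ?_)
    simp only [mem_filter, mem_univ, true_and, not_forall, mem_biUnion] at hx ⊢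
    obtain ⟨hxi, a, ha, hax⟩ := hx
    exact ⟨a, ha, hxi, hax⟩
  have hsplit' : (#{x | P x = i ∧ ∀ a ∈ A, G.Adj a x} : ℝ) +
      #{x | P x = i ∧ ¬ ∀ a ∈ A, G.Adj a x} = n := by exact_mod_cast hsplit
  linarith

lemma sub_mul_card_partCliques_le_card_partCliques_insert
    (hsize : ∀ i : Fin r, #{v | P v = i} = n) {δ : ℝ}
    (hδ : ∀ a i, P a ≠ i → (#{x | P x = i ∧ ¬ G.Adj a x} : ℝ) ≤ δ) {i : Fin r} (hi : i ∉ I) :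
    (n - #I * δ) * #(partCliques G P I) ≤ #(partCliques G P (insert i I)) := by
  set N : Finset V → Finset V := fun A => {x | P x = i ∧ ∀ a ∈ A, G.Adj a x}
  have hmaps : ∀ p ∈ (partCliques G P I).sigma N,
      insert p.2 p.1 ∈ partCliques G P (insert i I) := by
    rintro ⟨A, x⟩ hp
    obtain ⟨hA, hx⟩ := mem_sigma.1 hp
    obtain ⟨hcl, himg, hcard⟩ := mem_partCliques.1 hA
    simp only [N, mem_filter, mem_univ, true_and] at hx
    refine mem_partCliques.2 ⟨?_, ?_, ?_⟩
    · rw [coe_insert]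
      exact hcl.insert fun b hb _ => (hx.2 b hb).symm
    · rw [image_insert, himg, hx.1]
    · rw [card_insert_of_notMem (notMem_of_mem_partCliques hA (hx.1 ▸ hi)),
        card_insert_of_notMem hi, hcard]
  have hinj : Set.InjOn (fun p : (_ : Finset V) × V => insert p.2 p.1)
      ((partCliques G P I).sigma N) := by
    rintro ⟨A, x⟩ hp ⟨B, y⟩ hq (h : insert x A = insert y B)
    obtain ⟨hA, hx⟩ := mem_sigma.1 hp
    obtain ⟨hB, hy⟩ := mem_sigma.1 hq
    simp only [N, mem_filter, mem_univ, true_and] at hx hy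
    have hxA : x ∉ A := notMem_of_mem_partCliques hA (hx.1 ▸ hi)
    have hxB : x ∉ B := notMem_of_mem_partCliques hB (hx.1 ▸ hi)
    have hyB : y ∉ B := notMem_of_mem_partCliques hB (hy.1 ▸ hi)
    obtain rfl : x = y := (mem_insert.1 (h ▸ mem_insert_self x A)).resolve_right hxB
    obtain rfl : A = B := by rw [← erase_insert hxA, h, erase_insert hyB]
    rfl
  have hN : ∀ A ∈ partCliques G P I, n - #I * δ ≤ #(N A) := fun A hA => by
    obtain ⟨-, himg, hcard⟩ := mem_partCliques.1 hA
    rw [← hcard]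
    exact sub_card_mul_le_card_commonNbrs hsize hδ fun a ha hai =>
      hi (hai ▸ himg ▸ mem_image_of_mem P ha)
  calc (n - #I * δ) * #(partCliques G P I) = ∑ _A ∈ partCliques G P I, (n - #I * δ) := by
        rw [sum_const, nsmul_eq_mul, mul_comm]
    _ ≤ ∑ A ∈ partCliques G P I, (#(N A) : ℝ) := sum_le_sum hN
    _ = #((partCliques G P I).sigma N) := by rw [card_sigma, Nat.cast_sum]
    _ ≤ #(partCliques G P (insert i I)) := by
        exact_mod_cast card_le_card_of_injOn _ hmaps hinj

lemma sub_pow_le_card_partCliques (hsize : ∀ i : Fin r, #{v | P v = i} = n) {δ : ℝ}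
    (hδ : ∀ a i, P a ≠ i → (#{x | P x = i ∧ ¬ G.Adj a x} : ℝ) ≤ δ) (hδ0 : 0 ≤ δ)
    (hrδ : r * δ ≤ n) (I : Finset (Fin r)) :
    (n - r * δ) ^ #I ≤ #(partCliques G P I) := by
  induction I using Finset.induction_on with
  | empty =>
    have : (∅ : Finset V) ∈ partCliques G P ∅ := by simp
    simpa using card_pos.2 ⟨_, this⟩
  | insert i I hi ih =>
    have hIr : (#I : ℝ) ≤ r := by exact_mod_cast card_le_univ I |>.trans_eq (Fintype.card_fin r)
    rw [card_insert_of_notMem hi, pow_succ']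
    refine le_trans ?_ (sub_mul_card_partCliques_le_card_partCliques_insert hsize hδ hi)
    exact mul_le_mul (by nlinarith) ih (pow_nonneg (by linarith) _) (by nlinarith)

lemma card_nonNbrs_in_parts_le {δ : ℝ}
    (hδ : ∀ a i, P a ≠ i → (#{x | P x = i ∧ ¬ G.Adj a x} : ℝ) ≤ δ) (hδ0 : 0 ≤ δ) (w : V)
    (I : Finset (Fin r)) : (#{x | P x ∈ I ∧ P x ≠ P w ∧ ¬ G.Adj w x} : ℝ) ≤ #I * δ := by
  refine le_trans ?_ (cast_card_biUnion_le I (fun i => {x | P x = i ∧ P x ≠ P w ∧ ¬ G.Adj w x})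
    fun i _ => ?_)
  · refine Nat.cast_le.2 (card_le_card fun x hx => ?_)
    simp only [mem_filter, mem_univ, true_and, mem_biUnion] at hx ⊢
    exact ⟨P x, hx.1, rfl, hx.2⟩
  · by_cases hi : P w = i
    · rw [filter_eq_empty_iff.2 fun x _ hx => hx.2.1 (hx.1.trans hi.symm)]
      simpa using hδ0
    · exact le_trans (Nat.cast_le.2 (card_le_card fun x hx => by
        simp only [mem_filter, mem_univ, true_and] at hx ⊢; exact ⟨hx.1, hx.2.2⟩)) (hδ w i hi)

lemma card_partCliques_not_adj_le (hsize : ∀ i : Fin r, #{v | P v = i} = n) {δ : ℝ}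
    (hδ : ∀ a i, P a ≠ i → (#{x | P x = i ∧ ¬ G.Adj a x} : ℝ) ≤ δ) (hδ0 : 0 ≤ δ) (w : V) :
    (#{A ∈ partCliques G P I | ¬ ∀ x ∈ A, P x ≠ P w → G.Adj w x} : ℝ) ≤
      #I * δ * n ^ (#I - 1) := by
  set X : Finset V := {x | P x ∈ I ∧ P x ≠ P w ∧ ¬ G.Adj w x}
  calc (#{A ∈ partCliques G P I | ¬ ∀ x ∈ A, P x ≠ P w → G.Adj w x} : ℝ)
      ≤ #(X.biUnion fun x => {A ∈ partCliques G P I | x ∈ A}) := by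
        refine Nat.cast_le.2 (card_le_card fun A hA => ?_)
        obtain ⟨hA, hbad⟩ := mem_filter.1 hA
        push Not at hbad
        obtain ⟨x, hxA, hxw, hadj⟩ := hbad
        have hxI : P x ∈ I := (mem_partCliques.1 hA).2.1 ▸ mem_image_of_mem P hxA
        exact mem_biUnion.2 ⟨x, by simp [X, hxI, hxw, hadj], mem_filter.2 ⟨hA, hxA⟩⟩
    _ ≤ #X * (n ^ (#I - 1) : ℕ) := cast_card_biUnion_le X _ fun x hx => by
        simp only [X, mem_filter, mem_univ, true_and] at hx
        exact_mod_cast card_partCliques_filter_mem_le hsize hx.1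
    _ ≤ #I * δ * n ^ (#I - 1) := by
        push_cast
        exact mul_le_mul_of_nonneg_right (card_nonNbrs_in_parts_le hδ hδ0 w I) (by positivity)

lemma card_partCliques_sub_le_card_filter_forall_adj (hsize : ∀ i : Fin r, #{v | P v = i} = n)
    {δ : ℝ} (hδ : ∀ a i, P a ≠ i → (#{x | P x = i ∧ ¬ G.Adj a x} : ℝ) ≤ δ) (hδ0 : 0 ≤ δ)
    (W : Finset V) :
    #(partCliques G P I) - #W * (#I * δ * n ^ (#I - 1)) ≤
      #{A ∈ partCliques G P I | ∀ w ∈ W, ∀ x ∈ A, P x ≠ P w → G.Adj w x} := by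
  have hsplit := card_filter_add_card_filter_not (s := partCliques G P I)
    (fun A => ∀ w ∈ W, ∀ x ∈ A, P x ≠ P w → G.Adj w x)
  have hbad : (#{A ∈ partCliques G P I | ¬ ∀ w ∈ W, ∀ x ∈ A, P x ≠ P w → G.Adj w x} : ℝ) ≤
      #W * (#I * δ * n ^ (#I - 1)) := by
    refine le_trans (Nat.cast_le.2 (card_le_card fun A hA => ?_))
      (cast_card_biUnion_le W _ fun w _ => card_partCliques_not_adj_le hsize hδ hδ0 w)
    obtain ⟨hA, hbad⟩ := mem_filter.1 hA
    push Not at hbad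
    obtain ⟨w, hw, hbad⟩ := hbad
    exact mem_biUnion.2 ⟨w, hw, mem_filter.2 ⟨hA, by push Not; exact hbad⟩⟩
  have hsplit' : (#{A ∈ partCliques G P I | ∀ w ∈ W, ∀ x ∈ A, P x ≠ P w → G.Adj w x} : ℝ) +
      #{A ∈ partCliques G P I | ¬ ∀ w ∈ W, ∀ x ∈ A, P x ≠ P w → G.Adj w x} =
      #(partCliques G P I) := by exact_mod_cast hsplit
  linarith

end

lemma card_partCliques_erase_div_two_le {V : Type*} [Fintype V] [DecidableEq V] {r n : ℕ}
    {G : SimpleGraph V} {P : V → Fin r} (hsize : ∀ i : Fin r, #{v | P v = i} = n)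
    (hδ : ∀ a i, P a ≠ i → (#{x | P x = i ∧ ¬ G.Adj a x} : ℝ) ≤ n / (8 * r ^ 2))
    (j : Fin r) {W : Finset V} (hW : #W ≤ r + 1) :
    (#(partCliques G P (univ.erase j)) : ℝ) / 2 ≤
      #{A ∈ partCliques G P (univ.erase j) | ∀ w ∈ W, ∀ x ∈ A, P x ≠ P w → G.Adj w x} := by
  have hr : 0 < r := j.pos
  have hI : #(univ.erase j) = r - 1 := by simp
  have hδ0 : (0 : ℝ) ≤ n / (8 * r ^ 2) := by positivity
  have hrδ : r * (n / (8 * r ^ 2) : ℝ) ≤ n := by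
    rw [mul_div_assoc', div_le_iff₀ (by positivity)]
    have : (r : ℝ) ≤ 8 * r ^ 2 := by
      have : (1 : ℝ) ≤ r := by exact_mod_cast hr
      nlinarith
    nlinarith [mul_le_mul_of_nonneg_left this n.cast_nonneg]
  have hlow := sub_pow_le_card_partCliques hsize hδ hδ0 hrδ (univ.erase j)
  have hgood := card_partCliques_sub_le_card_filter_forall_adj hsize hδ hδ0 W (I := univ.erase j)
  have hnum := succ_mul_pred_mul_le_half_sub_pow hr n.cast_nonneg
  have hW' : (#W : ℝ) ≤ r + 1 := by exact_mod_cast hW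
  rw [hI] at hlow hgood
  have hbad : (0 : ℝ) ≤ (r - 1 : ℕ) * (n / (8 * r ^ 2)) * n ^ (r - 1 - 1) := by positivity
  nlinarith

theorem stmt_10_general {V : Type*} [Fintype V] [DecidableEq V] {r n : ℕ}
    (G : SimpleGraph V) (P : V → Fin r)
    (hsize : ∀ i : Fin r, (Finset.univ.filter fun v => P v = i).card = n)
    (hdeg : ∀ (ℓ : Fin r) (x : V), P x ≠ ℓ →
      (1 - 1 / (8 * (r : ℝ) ^ 2)) * n ≤
        ((Finset.univ.filter fun y => P y = ℓ ∧ G.Adj x y).card : ℝ))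
    (j : Fin r) (v v' : V) (hv : P v = j) (hv' : P v' = j)
    (u : Fin r → V)
    (hu : ∀ i, i ≠ j → P (u i) = i ∧ G.Adj v (u i) ∧ G.Adj v' (u i)) :
    ((partCliques G P Finset.univ).card : ℝ) / (2 * n) ≤
      ((partCliques G P (Finset.univ.erase j)).card : ℝ) / 2 ∧
    ((partCliques G P (Finset.univ.erase j)).card : ℝ) / 2 ≤
      ((Finset.univ.filter fun A : Finset V =>
          G.IsClique (A : Set V) ∧ A.card = r - 1 ∧
          (∀ i : Fin r, i ≠ j → (A.filter fun x => P x = i).card = 1) ∧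
          (∀ x ∈ A, G.Adj v x ∧ G.Adj v' x) ∧
          (∀ x ∈ A, ∀ i : Fin r, i ≠ j → i ≠ P x → G.Adj x (u i))).card : ℝ) := by
  refine ⟨?_, ?_⟩
  · have hk := card_partCliques_insert_le (G := G) hsize (notMem_erase j univ)
    rw [insert_erase (mem_univ j)] at hk
    refine div_le_of_le_mul₀ (by positivity) (by positivity) ?_
    calc (#(partCliques G P univ) : ℝ) ≤ #(partCliques G P (univ.erase j)) * n := by
          exact_mod_cast hk
      _ = #(partCliques G P (univ.erase j)) / 2 * (2 * n) := by ring
  · set W := insert v (insert v' ((univ.erase j).image u))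
    have hW : #W ≤ r + 1 := by
      refine (card_insert_le _ _).trans (Nat.succ_le_succ ((card_insert_le _ _).trans ?_))
      have := card_image_le (s := univ.erase j) (f := u)
      simp only [card_erase_of_mem (mem_univ j), card_univ, Fintype.card_fin] at this
      omega
    have hδ : ∀ a i, P a ≠ i → (#{x | P x = i ∧ ¬ G.Adj a x} : ℝ) ≤ n / (8 * r ^ 2) :=
      fun a i hai => card_not_adj_le_of_le_card_adj hsize <| by
        linarith [hdeg i a hai, show (1 - 1 / (8 * (r : ℝ) ^ 2)) * n = n - n / (8 * r ^ 2) by ring]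
    refine (card_partCliques_erase_div_two_le hsize hδ j hW).trans (Nat.cast_le.2 (card_le_card ?_))
    intro A hA
    obtain ⟨hA, hadj⟩ := mem_filter.1 hA
    obtain ⟨hcl, himg, hcard⟩ := mem_partCliques.1 hA
    have hPA : ∀ x ∈ A, P x ≠ j := fun x hx => (mem_erase.1 (himg ▸ mem_image_of_mem P hx)).1
    refine mem_filter.2 ⟨mem_univ A, hcl, by simpa using hcard, fun i hi =>
      card_filter_eq_one_of_mem_partCliques hA (mem_erase.2 ⟨hi, mem_univ i⟩),
      fun x hx => ⟨hadj v (mem_insert_self _ _) x hx (hv ▸ hPA x hx),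
        hadj v' (by simp [W]) x hx (hv' ▸ hPA x hx)⟩,
      fun x hx i hi hix => (hadj (u i) (mem_insert_of_mem (mem_insert_of_mem
        (mem_image_of_mem u (mem_erase.2 ⟨hi, mem_univ i⟩)))) x hx
        (by rw [(hu i hi).1]; exact Ne.symm hix)).symm⟩

/-- the auxiliary family H of transversal cliques is large:
|H| ≥ k_{[r]∖{j}}/2 ≥ k_{[r]}/(2n). -/
theorem stmt_10 {V : Type*} [Fintype V] [DecidableEq V] {r n : ℕ} (hr : 3 ≤ r)
    (hn : 8 * r ^ 2 ≤ n)
    (G : SimpleGraph V) (P : V → Fin r)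
    (hpart : ∀ u v, G.Adj u v → P u ≠ P v)
    (hsize : ∀ i : Fin r, (Finset.univ.filter fun v => P v = i).card = n)
    (hdeg : ∀ (ℓ : Fin r) (x : V), P x ≠ ℓ →
      (1 - 1 / (8 * (r : ℝ) ^ 2)) * n ≤
        ((Finset.univ.filter fun y => P y = ℓ ∧ G.Adj x y).card : ℝ))
    (j : Fin r) (v v' : V) (hv : P v = j) (hv' : P v' = j) (hvv' : v ≠ v')
    (u : Fin r → V)
    (hu : ∀ i, i ≠ j → P (u i) = i ∧ G.Adj v (u i) ∧ G.Adj v' (u i)) :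
    ((partCliques G P Finset.univ).card : ℝ) / (2 * n) ≤
      ((partCliques G P (Finset.univ.erase j)).card : ℝ) / 2 ∧
    ((partCliques G P (Finset.univ.erase j)).card : ℝ) / 2 ≤
      ((Finset.univ.filter fun A : Finset V =>
          G.IsClique (A : Set V) ∧ A.card = r - 1 ∧
          (∀ i : Fin r, i ≠ j → (A.filter fun x => P x = i).card = 1) ∧
          (∀ x ∈ A, G.Adj v x ∧ G.Adj v' x) ∧
          (∀ x ∈ A, ∀ i : Fin r, i ≠ j → i ≠ P x → G.Adj x (u i))).card : ℝ) :=
  stmt_10_general G P hsize hdeg j v v' hv hv' u hu
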